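/- For a group G and a subset A ⊆ G, the set A × G with operation (a,u)*(b,v) = (a, u v⁻¹ b v) is a rack, with inverse operation (a,u)*⁻¹(b,v) = (a, u v⁻¹ b⁻¹ v). -/
import Mathlib

/-- For a group `G` and a subset `A ⊆ G`, the set `A × G` with operation
`(a,u)*(b,v) = (a, u v⁻¹ b v)` is a rack, with inverse operation
`(a,u)*⁻¹(b,v) = (a, u v⁻¹ b⁻¹ v)`: the map `y ↦ y * x` is a bijection with
inverse `y ↦ y *⁻¹ x`, and `(x*y)*z = (x*z)*(y*z)`. -/
theorem GA_rack (G : Type*) [Group G] (A : Set G) :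
    ∀ (op opInv : A × G → A × G → A × G),
      (∀ x y : A × G, op x y = (x.1, x.2 * y.2⁻¹ * (y.1 : G) * y.2)) →
      (∀ x y : A × G, opInv x y = (x.1, x.2 * y.2⁻¹ * (y.1 : G)⁻¹ * y.2)) →
      (∀ x : A × G, Function.Bijective (fun y => op y x)) ∧
      (∀ x y : A × G, opInv (op y x) x = y) ∧
      (∀ x y : A × G, op (opInv y x) x = y) ∧
      (∀ x y z : A × G, op (op x y) z = op (op x z) (op y z)) := by
  intro op opInv hop hinv
  have h1 : ∀ x y : A × G, opInv (op y x) x = y := by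
    intro x y; simp [hop, hinv, mul_assoc]
  have h2 : ∀ x y : A × G, op (opInv y x) x = y := by
    intro x y; simp [hop, hinv, mul_assoc]
  refine ⟨fun x => Function.bijective_iff_has_inverse.mpr
    ⟨fun y => opInv y x, fun y => h1 x y, fun y => h2 x y⟩, h1, h2, ?_⟩
  intro x y z
  simp only [hop, hinv]
  ext <;> simp <;> group
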